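/- Let $0 \le \alpha < 1$ and $n \ge 2$ even. The $A_\alpha$-energy of the complete bipartite graph $K_{n/2, n/2}$ equals $(1-\alpha)n$, and moreover equality holds in the bound $E_{A_\alpha}(G) \ge \sqrt{2\alpha^2 Z_1 + 4(1-\alpha)^2 m - \frac{8\alpha^2 m^2}{n}}$ for $G = K_{n/2,n/2}$. -/

import Mathlib

/-!
On `K_{a,a}` with adjacency matrix `A` every vertex has degree `a`, so `A_α - α a • 1 = (1 - α) A`,
and `A ^ 3 = a ^ 2 A`. Hence each shifted eigenvalue `s = λ - α a` satisfies `s ^ 3 = b ^ 2 s` with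
`b = (1 - α) a`, i.e. `s ∈ {0, ± b}` and `|s| = s ^ 2 / b`. Summing, the energy is
`tr (((1 - α) A) ^ 2) / b = 2 (1 - α) ^ 2 a ^ 2 / b = 2 b`, and the radicand of the bound equals
`(2 b) ^ 2`.
-/

open Finset Matrix

lemma abs_eq_sq_div_of_pow_three_eq_sq_mul {s b : ℝ} (hb : 0 ≤ b) (h : s ^ 3 = b ^ 2 * s) :
    |s| = s ^ 2 / b := by
  have : s * (s - b) * (s + b) = 0 := by linear_combination h
  rcases mul_eq_zero.1 this with hs | hs
  · rcases mul_eq_zero.1 hs with hs | hs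
    · simp [hs]
    · obtain rfl : s = b := by linarith
      rw [abs_of_nonneg hb, sq, mul_self_div_self]
  · obtain rfl : s = -b := by linarith
    rw [abs_neg, abs_of_nonneg hb, neg_sq, sq, mul_self_div_self]

namespace Matrix.IsHermitian

variable {n 𝕜 : Type*} [RCLike 𝕜] [Fintype n] [DecidableEq n] {A : Matrix n n 𝕜}

lemma trace_cfc (hA : A.IsHermitian) (f : ℝ → ℝ) :
    (cfc f A).trace = ∑ i, (f (hA.eigenvalues i) : 𝕜) := by
  rw [cfc_eq hA f, IsHermitian.cfc, Unitary.conjStarAlgAut_apply, trace_mul_cycle,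
    Unitary.coe_star_mul_self, one_mul, trace_diagonal]
  rfl

lemma apply_eigenvalues_eq_zero_of_cfc_eq_zero (hA : A.IsHermitian) {f : ℝ → ℝ}
    (hf : cfc f A = 0) (i : n) : f (hA.eigenvalues i) = 0 := by
  rw [cfc_eq hA f, IsHermitian.cfc, map_eq_zero_iff _ (EquivLike.injective _),
    diagonal_eq_zero] at hf
  simpa using congrFun hf i

lemma cfc_sub_const_pow (hA : A.IsHermitian) (c : ℝ) (k : ℕ) :
    cfc (fun x => (x - c) ^ k) A = (A - c • 1) ^ k := by
  have : IsSelfAdjoint A := hA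
  rw [cfc_pow .., cfc_sub .., cfc_id' .., cfc_const .., Algebra.algebraMap_eq_smul_one]

lemma trace_sub_smul_one_pow (hA : A.IsHermitian) (c : ℝ) (k : ℕ) :
    ((A - c • 1) ^ k).trace = ∑ i, (((hA.eigenvalues i - c) ^ k : ℝ) : 𝕜) := by
  rw [← hA.cfc_sub_const_pow, hA.trace_cfc]

lemma eigenvalues_sub_pow_three (hA : A.IsHermitian) {c b : ℝ}
    (hcube : (A - c • 1) ^ 3 = b ^ 2 • (A - c • 1)) (i : n) :
    (hA.eigenvalues i - c) ^ 3 = b ^ 2 * (hA.eigenvalues i - c) := by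
  have : IsSelfAdjoint A := hA
  refine sub_eq_zero.1 <| hA.apply_eigenvalues_eq_zero_of_cfc_eq_zero
    (f := fun x => (x - c) ^ 3 - b ^ 2 * (x - c)) ?_ i
  have hlin : cfc (fun x => x - c) A = A - c • 1 := by simpa using hA.cfc_sub_const_pow c 1
  rw [cfc_sub .., cfc_const_mul .., hA.cfc_sub_const_pow, hlin, hcube, sub_self]

lemma sum_abs_eigenvalues_sub_eq {c b : ℝ} (hA : A.IsHermitian) (hb : 0 ≤ b)
    (hcube : (A - c • 1) ^ 3 = b ^ 2 • (A - c • 1)) :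
    ∑ i, |hA.eigenvalues i - c| = (∑ i, (hA.eigenvalues i - c) ^ 2) / b := by
  rw [Finset.sum_div]
  exact Finset.sum_congr rfl fun i _ =>
    abs_eq_sq_div_of_pow_three_eq_sq_mul hb (hA.eigenvalues_sub_pow_three hcube i)

end Matrix.IsHermitian

namespace SimpleGraph

section completeBipartite

variable {V W : Type*} [Fintype V] [Fintype W]

lemma completeBipartiteGraph_degree_inl [DecidableRel (completeBipartiteGraph V W).Adj] (v : V) :
    (completeBipartiteGraph V W).degree (.inl v) = Fintype.card W := by
  rw [← card_neighborSet_eq_degree]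
  exact Fintype.card_congr <| (Equiv.setCongr (by ext w; cases w <;> simp)).trans
    (Equiv.ofInjective _ Sum.inr_injective).symm

lemma completeBipartiteGraph_degree_inr [DecidableRel (completeBipartiteGraph V W).Adj] (w : W) :
    (completeBipartiteGraph V W).degree (.inr w) = Fintype.card V := by
  rw [← card_neighborSet_eq_degree]
  exact Fintype.card_congr <| (Equiv.setCongr (by ext v; cases v <;> simp)).trans
    (Equiv.ofInjective _ Sum.inl_injective).symm

lemma isRegularOfDegree_completeBipartiteGraph_self
    [DecidableRel (completeBipartiteGraph V V).Adj] :
    (completeBipartiteGraph V V).IsRegularOfDegree (Fintype.card V) := by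
  rintro (v | v)
  · exact completeBipartiteGraph_degree_inl v
  · exact completeBipartiteGraph_degree_inr v

lemma completeBipartiteGraph_adjMatrix_pow_three {R : Type*} [CommSemiring R]
    [DecidableEq V] [DecidableEq W] [DecidableRel (completeBipartiteGraph V W).Adj] :
    (completeBipartiteGraph V W).adjMatrix R ^ 3
      = (Fintype.card V * Fintype.card W : R) • (completeBipartiteGraph V W).adjMatrix R := by
  ext (v | w) (v' | w') <;>
    simp [pow_succ, Matrix.mul_apply, Fintype.sum_sum_type, mul_comm]

end completeBipartite

variable {V : Type*} [Fintype V] {G : SimpleGraph V} [DecidableRel G.Adj]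

lemma IsRegularOfDegree.two_mul_card_edgeFinset {k : ℕ} (hG : G.IsRegularOfDegree k) :
    2 * #G.edgeFinset = Fintype.card V * k := by
  simp [← sum_degrees_eq_twice_card_edges, hG.degree_eq]

variable [DecidableEq V]

lemma trace_adjMatrix_sq (R : Type*) [Semiring R] :
    (G.adjMatrix R ^ 2).trace = 2 * #G.edgeFinset := by
  simp_rw [sq, trace, diag_apply, adjMatrix_mul_self_apply_self]
  rw [← Nat.cast_sum, G.sum_degrees_eq_twice_card_edges, Nat.cast_mul, Nat.cast_ofNat]

lemma IsRegularOfDegree.diagonal_degree {k : ℕ} (hG : G.IsRegularOfDegree k) (R : Type*)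
    [Semiring R] :
    diagonal (fun v => (G.degree v : R)) = (k : R) • 1 := by
  simp_rw [hG.degree_eq, smul_one_eq_diagonal]

noncomputable def aAlphaMatrix (G : SimpleGraph V) [DecidableRel G.Adj] (α : ℝ) : Matrix V V ℝ :=
  α • diagonal (fun v => (G.degree v : ℝ)) + (1 - α) • G.adjMatrix ℝ

lemma IsRegularOfDegree.aAlphaMatrix_sub_smul_one {k : ℕ} (hG : G.IsRegularOfDegree k) (α : ℝ) :
    G.aAlphaMatrix α - (α * k) • 1 = (1 - α) • G.adjMatrix ℝ := by
  rw [aAlphaMatrix, hG.diagonal_degree, smul_smul, add_sub_cancel_left]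

lemma IsRegularOfDegree.sum_abs_eigenvalues_aAlphaMatrix_sub {k : ℕ} {α : ℝ}
    (hG : G.IsRegularOfDegree k) (hα : α < 1) (hH : (G.aAlphaMatrix α).IsHermitian)
    (hA : G.adjMatrix ℝ ^ 3 = ((k : ℝ) ^ 2) • G.adjMatrix ℝ) :
    ∑ i, |hH.eigenvalues i - α * k| = (1 - α) * (2 * #G.edgeFinset / k) := by
  have hshift := hG.aAlphaMatrix_sub_smul_one α
  have hcube : (G.aAlphaMatrix α - (α * k) • 1) ^ 3
      = ((1 - α) * k) ^ 2 • (G.aAlphaMatrix α - (α * k) • 1) := by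
    rw [hshift, smul_pow, hA, smul_smul, smul_smul]
    ring_nf
  have hsq : ∑ i, (hH.eigenvalues i - α * k) ^ 2 = (1 - α) ^ 2 * (2 * #G.edgeFinset) := by
    have := hH.trace_sub_smul_one_pow (α * k) 2
    rw [hshift, smul_pow, trace_smul, trace_adjMatrix_sq] at this
    simpa using this.symm
  have hb : 0 ≤ (1 - α) * k := mul_nonneg (by linarith) k.cast_nonneg
  rw [hH.sum_abs_eigenvalues_sub_eq hb hcube, hsq, sq, mul_assoc,
    mul_div_mul_left _ _ (by linarith : 1 - α ≠ 0), mul_div_assoc]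

end SimpleGraph

theorem energy_Aalpha_completeBipartite_general (a : ℕ) (α : ℝ) (hα1 : α < 1)
    [inst : DecidableRel (completeBipartiteGraph (Fin a) (Fin a)).Adj]
    (hH : (α • Matrix.diagonal
          (fun v => ((completeBipartiteGraph (Fin a) (Fin a)).degree v : ℝ))
        + (1 - α) • (completeBipartiteGraph (Fin a) (Fin a)).adjMatrix ℝ).IsHermitian) :
    (∑ i, |hH.eigenvalues i
        - 2 * α * ((completeBipartiteGraph (Fin a) (Fin a)).edgeFinset.card : ℝ)
            / (2 * a : ℝ)|
      = (1 - α) * (2 * a : ℝ)) ∧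
    (∑ i, |hH.eigenvalues i
        - 2 * α * ((completeBipartiteGraph (Fin a) (Fin a)).edgeFinset.card : ℝ)
            / (2 * a : ℝ)|
      = Real.sqrt (2 * α ^ 2
            * (∑ v, ((completeBipartiteGraph (Fin a) (Fin a)).degree v : ℝ) ^ 2)
          + 4 * (1 - α) ^ 2
            * ((completeBipartiteGraph (Fin a) (Fin a)).edgeFinset.card : ℝ)
          - 8 * α ^ 2
            * ((completeBipartiteGraph (Fin a) (Fin a)).edgeFinset.card : ℝ) ^ 2
            / (2 * a : ℝ))) := by
  have hreg : (completeBipartiteGraph (Fin a) (Fin a)).IsRegularOfDegree a := by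
    simpa using SimpleGraph.isRegularOfDegree_completeBipartiteGraph_self (V := Fin a)
  have hm : (#(completeBipartiteGraph (Fin a) (Fin a)).edgeFinset : ℝ) = a ^ 2 := by
    have h := hreg.two_mul_card_edgeFinset
    simp only [Fintype.card_sum, Fintype.card_fin] at h
    have : (2 * #(completeBipartiteGraph (Fin a) (Fin a)).edgeFinset : ℝ) = (a + a) * a := by
      exact_mod_cast h
    linarith
  have hZ1 : ∑ v, ((completeBipartiteGraph (Fin a) (Fin a)).degree v : ℝ) ^ 2 = 2 * a ^ 3 := by
    simp only [hreg.degree_eq, sum_const, card_univ, Fintype.card_sum, Fintype.card_fin,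
      nsmul_eq_mul]
    push_cast; ring
  have hcenter : 2 * α * (#(completeBipartiteGraph (Fin a) (Fin a)).edgeFinset : ℝ) / (2 * a)
      = α * a := by
    rw [hm, mul_div_mul_comm, sq, mul_self_div_self]
    ring
  have henergy : ∑ i, |hH.eigenvalues i - α * a| = (1 - α) * (2 * a) := by
    refine (hreg.sum_abs_eigenvalues_aAlphaMatrix_sub hα1 hH ?_).trans ?_
    · rw [SimpleGraph.completeBipartiteGraph_adjMatrix_pow_three, Fintype.card_fin, sq]
    · rw [hm, show 2 * (a : ℝ) ^ 2 / a = 2 * (a * a / a) by ring, mul_self_div_self]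
  have hradicand :
      2 * α ^ 2 * (2 * a ^ 3) + 4 * (1 - α) ^ 2 * a ^ 2 - 8 * α ^ 2 * (a ^ 2) ^ 2 / (2 * a)
        = ((1 - α) * (2 * a)) ^ 2 := by
    rw [show 8 * α ^ 2 * ((a : ℝ) ^ 2) ^ 2 / (2 * a) = 4 * α ^ 2 * a ^ 2 * (a * a / a) by ring,
      mul_self_div_self]
    ring
  rw [hcenter, henergy, hm, hZ1, hradicand, Real.sqrt_sq (by nlinarith [a.cast_nonneg (α := ℝ)])]
  exact ⟨rfl, rfl⟩

/-- For `0 ≤ α < 1` and `n = 2a ≥ 2`, the `A_α`-energy of `K_{n/2,n/2} = K_{a,a}`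
equals `(1-α) n`, and it attains equality in the lower bound
`E_{A_α}(G) ≥ √(2 α² Z₁ + 4 (1-α)² m - 8 α² m² / n)`. -/
theorem energy_Aalpha_completeBipartite (a : ℕ) (ha : 1 ≤ a) (α : ℝ)
    (hα0 : 0 ≤ α) (hα1 : α < 1)
    [inst : DecidableRel (completeBipartiteGraph (Fin a) (Fin a)).Adj]
    (hH : (α • Matrix.diagonal
          (fun v => ((completeBipartiteGraph (Fin a) (Fin a)).degree v : ℝ))
        + (1 - α) • (completeBipartiteGraph (Fin a) (Fin a)).adjMatrix ℝ).IsHermitian) :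
    (∑ i, |hH.eigenvalues i
        - 2 * α * ((completeBipartiteGraph (Fin a) (Fin a)).edgeFinset.card : ℝ)
            / (2 * a : ℝ)|
      = (1 - α) * (2 * a : ℝ)) ∧
    (∑ i, |hH.eigenvalues i
        - 2 * α * ((completeBipartiteGraph (Fin a) (Fin a)).edgeFinset.card : ℝ)
            / (2 * a : ℝ)|
      = Real.sqrt (2 * α ^ 2
            * (∑ v, ((completeBipartiteGraph (Fin a) (Fin a)).degree v : ℝ) ^ 2)
          + 4 * (1 - α) ^ 2
            * ((completeBipartiteGraph (Fin a) (Fin a)).edgeFinset.card : ℝ)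
          - 8 * α ^ 2
            * ((completeBipartiteGraph (Fin a) (Fin a)).edgeFinset.card : ℝ) ^ 2
            / (2 * a : ℝ))) :=
  energy_Aalpha_completeBipartite_general a α hα1 (inst := inst) hH
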